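/- Let G be an abelian group, g ∈ G with g² ≠ 1, and let J be a T_G-ideal with Id_G(UT₃⁽⁻⁾, Γ(g,g⁻¹)) ⊆ J. Let A^{(g,g⁻¹)} be the set of polynomials of type (g,g⁻¹) belonging to J. Then there exists a finite subset Ã ⊆ A^{(g,g⁻¹)} such that A^{(g,g⁻¹)} ⊆ ⟨Ã⟩^{T_G} + Id_G(UT₃⁽⁻⁾, Γ(g,g⁻¹)). -/

import Mathlib

open FreeLieAlgebra

/-- The free `G`-graded Lie algebra over `K` on variables `x_{i,g}`, `i ∈ ℕ`, `g ∈ G`. -/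
abbrev FL (K : Type*) [Field K] (G : Type*) := FreeLieAlgebra K (ℕ × G)

section Framework

variable (K : Type*) [Field K] (G : Type*) [CommGroup G]

attribute [local instance 100] LieRing.ofAssociativeRing

/-- `IsHom K G g a` : `a` is homogeneous of degree `g` in the free graded Lie algebra. -/
inductive IsHom : G → FL K G → Prop
  | var (i : ℕ) (g : G) : IsHom g (of K (i, g))
  | zero (g : G) : IsHom g 0
  | add {g : G} {a b : FL K G} : IsHom g a → IsHom g b → IsHom g (a + b)
  | smul {g : G} {a : FL K G} (c : K) : IsHom g a → IsHom g (c • a)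
  | lie {g h : G} {a b : FL K G} : IsHom g a → IsHom h b → IsHom (g * h) ⁅a, b⁆

/-- A graded substitution: an endomorphism sending each variable `x_{i,g}` to a homogeneous
element of degree `g`. -/
def IsGradedSubst (φ : FL K G →ₗ⁅K⁆ FL K G) : Prop :=
  ∀ (i : ℕ) (g : G), IsHom K G g (φ (of K (i, g)))

/-- A `T_G`-ideal: a Lie ideal invariant under all graded substitutions. -/
def IsTIdeal (I : LieIdeal K (FL K G)) : Prop :=
  ∀ φ : FL K G →ₗ⁅K⁆ FL K G, IsGradedSubst K G φ → ∀ a ∈ I, φ a ∈ I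

/-- The `T_G`-ideal generated by a set `S`. -/
noncomputable def tClosure (S : Set (FL K G)) : LieIdeal K (FL K G) :=
  sInf {I : LieIdeal K (FL K G) | IsTIdeal K G I ∧ S ⊆ ↑I}

/-- The graded polynomial identities of a `G`-graded Lie algebra `(A, Γ)`, as a Lie ideal of the
free graded Lie algebra. -/
def gradedIdeal (A : Type*) [LieRing A] [LieAlgebra K A] (Γ : G → Submodule K A) :
    LieIdeal K (FL K G) where
  carrier := {f | ∀ ψ : FL K G →ₗ⁅K⁆ A, (∀ (i : ℕ) (g : G), ψ (of K (i, g)) ∈ Γ g) → ψ f = 0}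
  add_mem' := by
    intro a b ha hb ψ hψ
    rw [map_add, ha ψ hψ, hb ψ hψ, add_zero]
  zero_mem' := by
    intro ψ _
    exact ψ.map_zero
  smul_mem' := by
    intro c a ha ψ hψ
    rw [map_smul, ha ψ hψ, smul_zero]
  lie_mem := by
    intro x m hm ψ hψ
    rw [ψ.map_lie, hm ψ hψ, lie_zero]

/-- Left-normed iterated commutator `[x, l₁, l₂, …]`. -/
noncomputable def lnorm (x : FL K G) (l : List (FL K G)) : FL K G := l.foldl (fun a b => ⁅a, b⁆) x

/-- The list `y₁^{(p₁)}, …, y_r^{(p_r)}` of trivial-degree variables with multiplicities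
(0-indexed: the variables are `x_{0,1}, …, x_{r-1,1}`). -/
noncomputable def yRun (p : ℕ → ℕ) : ℕ → List (FL K G)
  | 0 => []
  | n + 1 => yRun p n ++ List.replicate (p n) (of K (n, (1 : G)))

/-- 3×3 matrices. -/
abbrev M3 (K : Type*) [Field K] := Matrix (Fin 3) (Fin 3) K

/-- Matrix units. -/
def E3 (i j : Fin 3) : M3 K := Matrix.single i j 1

/-- The elementary grading `Γ(g,h)` on upper triangular 3×3 matrices:
`deg e₁₁ = deg e₂₂ = deg e₃₃ = 1`, `deg e₁₂ = g`, `deg e₂₃ = h`, `deg e₁₃ = gh`.  The component of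
degree `l` is the span of the matrix units of degree `l`. -/
def utGrading (g h : G) : G → Submodule K (M3 K) := fun l =>
  Submodule.span K {m : M3 K |
    (l = 1 ∧ (m = E3 K 0 0 ∨ m = E3 K 1 1 ∨ m = E3 K 2 2)) ∨
    (l = g ∧ m = E3 K 0 1) ∨ (l = h ∧ m = E3 K 1 2) ∨ (l = g * h ∧ m = E3 K 0 2)}

/-- The support of the grading `Γ(g,h)`. -/
def utSupp (g h : G) : Set G := {l | utGrading K G g h l ≠ ⊥}

/-- The graded identities `Id_G(UT₃⁽⁻⁾, Γ(g,h))`. -/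
def IdUT3 (g h : G) : LieIdeal K (FL K G) := gradedIdeal K G (M3 K) (utGrading K G g h)

/-- 2×2 matrices. -/
abbrev M2 (K : Type*) [Field K] := Matrix (Fin 2) (Fin 2) K

/-- Matrix units. -/
def E2 (i j : Fin 2) : M2 K := Matrix.single i j 1

/-- The space of upper triangular 2×2 matrices, `UT₂⁽⁻⁾`. -/
def ut2 : Submodule K (M2 K) := Submodule.span K {E2 K 0 0, E2 K 1 1, E2 K 0 1}

/-- Ordinary (ungraded) Lie polynomial identities of `UT₂⁽⁻⁾`. -/
def IdUT2 : Set (FL K G) :=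
  {f | ∀ ψ : FL K G →ₗ⁅K⁆ M2 K, (∀ (i : ℕ) (g : G), ψ (of K (i, g)) ∈ ut2 K) → ψ f = 0}

/-- The free Lie subalgebra `L(Y)` on the trivial-degree variables. -/
noncomputable def LY : LieSubalgebra K (FL K G) :=
  LieSubalgebra.lieSpan K (FL K G) {a | ∃ i : ℕ, a = of K (i, (1 : G))}

/-- Exponent bound: `0 ≤ p ℓ < |K|` when `K` is finite (no bound when `K` is infinite). -/
def expOK (r : ℕ) (p : ℕ → ℕ) : Prop := ∀ ℓ < r, Finite K → p ℓ < Nat.card K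

end Framework

/-! ## Statement 11 : finite basis for sets of polynomials of type `(g, g⁻¹)` -/

/-- The commutator `[[x_g, y₁^{(p₁)},…,y_r^{(p_r)}], [x_{g⁻¹}, y₁^{(q₁)},…,y_r^{(q_r)}]]`. -/
noncomputable def monAU (K : Type*) [Field K] {G : Type*} [CommGroup G] (g : G)
    (r : ℕ) (p q : ℕ → ℕ) : FL K G :=
  ⁅lnorm K G (of K (0, g)) (yRun K G p r), lnorm K G (of K (0, g⁻¹)) (yRun K G q r)⁆

/-- Data describing a polynomial of type `(g, g⁻¹)`. -/
structure AUData (K : Type*) [Field K] where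
  /-- number of `y` variables -/
  r : ℕ
  /-- number of summands -/
  t : ℕ
  /-- coefficients -/
  α : Fin t → K
  /-- exponents on the `y`'s inside the first inner commutator -/
  p : Fin t → ℕ → ℕ
  /-- exponents on the `y`'s inside the second inner commutator -/
  q : Fin t → ℕ → ℕ

/-- The polynomial described by the data. -/
noncomputable def AUData.elem {K : Type*} [Field K] {G : Type*} [CommGroup G] (g : G)
    (d : AUData K) : FL K G :=
  ∑ s : Fin d.t, d.α s • monAU K g d.r (d.p s) (d.q s)

/-- Validity: at least one summand, all coefficients nonzero, all summands of the same
multidegree in the `y`'s, and pairwise distinct commutators. -/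
def AUData.Valid {K : Type*} [Field K] (d : AUData K) : Prop :=
  0 < d.t ∧ (∀ s, d.α s ≠ 0) ∧
  (∀ s s' : Fin d.t, ∀ ℓ < d.r, d.p s ℓ + d.q s ℓ = d.p s' ℓ + d.q s' ℓ) ∧
  (∀ s s' : Fin d.t, (∀ ℓ < d.r, d.p s ℓ = d.p s' ℓ ∧ d.q s ℓ = d.q s' ℓ) → s = s')

/-- `f` is a polynomial of type `(g, g⁻¹)`. -/
def IsAU (K : Type*) [Field K] {G : Type*} [CommGroup G] (g : G) (f : FL K G) : Prop :=
  ∃ d : AUData K, d.Valid ∧ f = AUData.elem g d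

/-!
On `UT₃` graded by `Γ(g, g⁻¹)` with `g² ≠ 1`, the variable `x_g` takes values in `K e₁₂`,
`x_{g⁻¹}` in `K e₂₃`, and a trivial-degree `y_i` in the span of `e₁₁, e₂₂, e₃₃, e₁₃`. Commuting with
`y_i` multiplies `e₁₂` by `u_i = (y_i)₂₂ - (y_i)₁₁` and `e₂₃` by `v_i = (y_i)₃₃ - (y_i)₂₂`, so a
polynomial of type `(g, g⁻¹)` evaluates to `a c P(u, v) e₁₃`, where `x_g ↦ a e₁₂`,
`x_{g⁻¹} ↦ c e₂₃` and `P` is a commutative polynomial (`Represents`). The graded substitutions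
`x_g ↦ [x_g, y_i]`, `x_{g⁻¹} ↦ [x_{g⁻¹}, y_i]` and `y_i ↦ y_{π i}` with `π` increasing act on `P`
as multiplication by `u_i`, `v_i` and as renaming. Everything thus reduces to Cohen's theorem: an
ideal of `K[u_i, v_i]` stable under increasing renamings is generated, up to renamings, by finitely
many of its elements. Indeed, leading monomials for the degree-lexicographic order are
well-quasi-ordered by divisibility up to increasing renaming (Higman's lemma), and dividing by the
renamed generators leaves no remainder.
-/

open MvPolynomial MonomialOrder
open scoped MonomialOrder

theorem WellQuasiOrdered.exists_finite_basis {α : Type*} {r : α → α → Prop}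
    (hr : WellQuasiOrdered r) (L : Set α) : ∃ F ⊆ L, F.Finite ∧ ∀ x ∈ L, ∃ y ∈ F, r y x := by
  by_contra! h
  obtain ⟨f, -, hbad⟩ := exists_seq_of_forall_finset_exists (· ∈ L) (fun y x => ¬ r y x)
    fun s hs => h s hs s.finite_toSet
  obtain ⟨m, n, hmn, hr'⟩ := hr f
  exact hbad m n hmn hr'

section MapDomain

variable {σ : Type*} [LinearOrder σ] {e : σ → σ}

theorem Finsupp.toLex_mapDomain_lt {N : Type*} [AddCommMonoid N] [LT N] (he : StrictMono e)
    {a b : σ →₀ N} (h : toLex a < toLex b) :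
    toLex (Finsupp.mapDomain e a) < toLex (Finsupp.mapDomain e b) := by
  obtain ⟨i, hlt, hi⟩ := Finsupp.Lex.lt_iff.mp h
  refine Finsupp.Lex.lt_iff.mpr ⟨e i, fun j hj => ?_, ?_⟩
  · by_cases hj' : j ∈ Set.range e
    · obtain ⟨k, rfl⟩ := hj'
      simp only [ofLex_toLex, Finsupp.mapDomain_apply he.injective]
      exact hlt k (he.lt_iff_lt.mp hj)
    · simp [Finsupp.mapDomain_of_notMem_range _ _ hj']
  · simpa [Finsupp.mapDomain_apply he.injective] using hi

theorem Finsupp.DegLex.strictMono_mapDomain (he : StrictMono e) :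
    StrictMono fun a : DegLex (σ →₀ ℕ) => toDegLex (Finsupp.mapDomain e (ofDegLex a)) := by
  intro a b h
  simp only [Finsupp.DegLex.lt_iff, ofDegLex_toDegLex, Finsupp.degree_mapDomain] at h ⊢
  exact h.imp_right fun h => ⟨h.1, Finsupp.toLex_mapDomain_lt he h.2⟩

variable [WellFoundedGT σ] {R : Type*} [CommSemiring R]

theorem MonomialOrder.degLex_degree_rename (he : StrictMono e) (f : MvPolynomial σ R) :
    degLex.degree (rename e f) = Finsupp.mapDomain e (degLex.degree f) := by
  classical
  rcases eq_or_ne f 0 with rfl | hf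
  · simp
  have hsupp := support_rename_of_injective (p := f) he.injective
  apply degLex.toSyn.injective
  apply le_antisymm
  · refine degLex.degree_le_iff.mpr fun d hd => ?_
    rw [hsupp, Finset.mem_image] at hd
    obtain ⟨d, hd, rfl⟩ := hd
    exact (Finsupp.DegLex.strictMono_mapDomain he).monotone (degLex.le_degree hd)
  · refine degLex.le_degree ?_
    rw [hsupp]
    exact Finset.mem_image_of_mem _ (degLex.degree_mem_support hf)

end MapDomain

theorem Finsupp.mapDomain_le {α β N : Type*} [AddCommMonoid N] [PartialOrder N]
    [CanonicallyOrderedAdd N] {e : α → β} (he : e.Injective) {a : α →₀ N} {b : β →₀ N}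
    (h : ∀ x, a x ≤ b (e x)) : Finsupp.mapDomain e a ≤ b := by
  intro y
  by_cases hy : y ∈ Set.range e
  · obtain ⟨x, rfl⟩ := hy
    rw [Finsupp.mapDomain_apply he]
    exact h x
  · simp [Finsupp.mapDomain_of_notMem_range _ _ hy]

theorem List.SublistForall₂.exists_strictMono_getD {α : Type*} {r : α → α → Prop} [Std.Refl r]
    (d : α) {l₁ l₂ : List α} (h : SublistForall₂ r l₁ l₂) :
    ∃ π : ℕ → ℕ, StrictMono π ∧ ∀ i, r (l₁.getD i d) (l₂.getD (π i) d) := by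
  induction h with
  | @nil l =>
    refine ⟨(· + l.length), strictMono_id.add_const _, fun i => ?_⟩
    rw [getD_nil, getD_eq_default l d (Nat.le_add_left _ _)]
    exact refl d
  | cons hab _ ih =>
    obtain ⟨π, hπ, hle⟩ := ih
    refine ⟨fun | 0 => 0 | i + 1 => π i + 1, strictMono_nat_of_lt_succ fun i => ?_, fun i => ?_⟩
    · cases i <;> simp [hπ.lt_iff_lt]
    · cases i
      · exact hab
      · exact hle _
  | cons_right _ ih =>
    obtain ⟨π, hπ, hle⟩ := ih
    exact ⟨(π · + 1), hπ.add_const 1, fun i => by simpa using hle i⟩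

/-- Variables `x_{i,t}` (position `i`, family `t`). The order is reversed so that `degLex` is
well-founded and makes later positions more significant. -/
abbrev IncVar (τ : Type*) := (ℕ ×ₗ τ)ᵒᵈ

namespace IncVar

variable {τ : Type*}

def mk (i : ℕ) (t : τ) : IncVar τ := OrderDual.toDual (toLex (i, t))

def index (x : IncVar τ) : ℕ := (ofLex (OrderDual.ofDual x)).1

def family (x : IncVar τ) : τ := (ofLex (OrderDual.ofDual x)).2

def incMap (π : ℕ → ℕ) (x : IncVar τ) : IncVar τ := mk (π x.index) x.family

theorem incMap_comp (π ρ : ℕ → ℕ) : incMap π ∘ incMap ρ = (incMap (π ∘ ρ) : IncVar τ → _) := rfl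

theorem incMap_id : (incMap id : IncVar τ → IncVar τ) = id := rfl

theorem strictMono_incMap [Preorder τ] {π : ℕ → ℕ} (hπ : StrictMono π) :
    StrictMono (incMap π : IncVar τ → IncVar τ) := by
  rintro ⟨i, t⟩ ⟨j, s⟩ h
  change toLex (j, s) < toLex (i, t) at h
  change toLex (π j, s) < toLex (π i, t)
  rw [Prod.Lex.toLex_lt_toLex] at h ⊢
  exact h.imp hπ.lt_iff_lt.mpr fun h => ⟨congrArg π h.1, h.2⟩

def IncDvd (a b : IncVar τ →₀ ℕ) : Prop :=
  ∃ π : ℕ → ℕ, StrictMono π ∧ ∀ i t, a (mk i t) ≤ b (mk (π i) t)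

def column (a : IncVar τ →₀ ℕ) (i : ℕ) : τ → ℕ := fun t => a (mk i t)

def word (a : IncVar τ →₀ ℕ) : List (τ → ℕ) :=
  (List.range (a.support.sup index + 1)).map (column a)

theorem word_getD (a : IncVar τ →₀ ℕ) (i : ℕ) : (word a).getD i 0 = column a i := by
  by_cases hi : i < a.support.sup index + 1
  · simp [word, hi]
  · rw [List.getD_eq_default _ _ (by simpa [word] using hi)]
    ext t
    refine (Finsupp.notMem_support_iff.mp fun h => hi ?_).symm
    exact Nat.lt_succ_of_le (Finset.le_sup (f := index) h)

theorem wellQuasiOrdered_incDvd [Finite τ] : WellQuasiOrdered (IncDvd (τ := τ)) := by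
  intro a
  have hcol : (Set.univ : Set (τ → ℕ)).PartiallyWellOrderedOn (· ≤ ·) :=
    Set.isPWO_of_wellQuasiOrderedLE _
  obtain ⟨m, n, hmn, hsub⟩ := (hcol.partiallyWellOrderedOn_sublistForall₂ (· ≤ ·)).exists_lt
    (f := fun n => word (a n)) fun _ _ _ => trivial
  obtain ⟨π, hπ, hle⟩ := hsub.exists_strictMono_getD 0
  exact ⟨m, n, hmn, π, hπ, fun i t => by
    have := hle i t
    rwa [word_getD, word_getD] at this⟩

end IncVar

section Cohen

open IncVar

variable {R τ : Type*} [CommSemiring R]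

def IsIncStable (I : Ideal (MvPolynomial (IncVar τ) R)) : Prop :=
  ∀ π : ℕ → ℕ, StrictMono π → ∀ p ∈ I, rename (incMap π) p ∈ I

noncomputable def incSpan (S : Set (MvPolynomial (IncVar τ) R)) :
    Ideal (MvPolynomial (IncVar τ) R) :=
  Ideal.span {p | ∃ s ∈ S, ∃ π : ℕ → ℕ, StrictMono π ∧ rename (incMap π) s = p}

theorem subset_incSpan (S : Set (MvPolynomial (IncVar τ) R)) : S ⊆ incSpan S :=
  fun s hs => Ideal.subset_span ⟨s, hs, id, strictMono_id, by rw [incMap_id, rename_id]; rfl⟩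

theorem isIncStable_incSpan (S : Set (MvPolynomial (IncVar τ) R)) : IsIncStable (incSpan S) := by
  intro π hπ p hp
  have := Ideal.mem_map_of_mem (rename (incMap π)) hp
  rw [incSpan, Ideal.map_span] at this
  refine Ideal.span_mono ?_ this
  rintro _ ⟨_, ⟨s, hs, ρ, hρ, rfl⟩, rfl⟩
  exact ⟨s, hs, π ∘ ρ, hπ.comp hρ, by rw [rename_rename, incMap_comp]⟩

theorem incSpan_le {S : Set (MvPolynomial (IncVar τ) R)} {I : Ideal (MvPolynomial (IncVar τ) R)}
    (hI : IsIncStable I) (hS : S ⊆ I) : incSpan S ≤ I :=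
  Ideal.span_le.mpr <| by
    rintro _ ⟨s, hs, π, hπ, rfl⟩
    exact hI π hπ s (hS hs)

variable {K : Type*} [Field K] [LinearOrder τ] [Finite τ]

theorem le_incSpan_of_forall_incDvd_degree {I : Ideal (MvPolynomial (IncVar τ) K)}
    (hI : IsIncStable I) {B : Set (MvPolynomial (IncVar τ) K)} (hBI : B ⊆ I) (hB0 : 0 ∉ B)
    (hB : ∀ f ∈ I, f ≠ 0 → ∃ b ∈ B, IncDvd (degLex.degree b) (degLex.degree f)) :
    I ≤ incSpan B := by
  intro f hf
  set gens := {p | ∃ b ∈ B, ∃ π : ℕ → ℕ, StrictMono π ∧ rename (incMap π) b = p}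
  have hunit : ∀ p ∈ gens, IsUnit (degLex.leadingCoeff p) := by
    rintro _ ⟨b, hb, π, hπ, rfl⟩
    refine isUnit_iff_ne_zero.mpr (degLex.leadingCoeff_ne_zero_iff.mpr ?_)
    rw [← map_zero (rename (incMap π)),
      (rename_injective _ (strictMono_incMap hπ).injective).ne_iff]
    exact ne_of_mem_of_not_mem hb hB0
  obtain ⟨g, r, hfgr, -, hr⟩ := degLex.div_set hunit f
  have hcomb : Finsupp.linearCombination _ (fun p : gens => (p : MvPolynomial (IncVar τ) K)) g ∈
      incSpan B := by
    rw [incSpan, Ideal.span, ← Subtype.range_coe_subtype, ← Finsupp.range_linearCombination]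
    exact LinearMap.mem_range_self _ g
  suffices r = 0 by rwa [hfgr, this, add_zero]
  by_contra hr0
  have hrI : r ∈ I := by
    rw [eq_sub_of_add_eq' hfgr.symm]
    exact I.sub_mem hf (incSpan_le hI hBI hcomb)
  obtain ⟨b, hb, π, hπ, hdvd⟩ := hB r hrI hr0
  refine hr _ (degLex.degree_mem_support hr0) _ ⟨b, hb, π, hπ, rfl⟩ ?_
  rw [degLex_degree_rename (strictMono_incMap hπ)]
  exact Finsupp.mapDomain_le (strictMono_incMap hπ).injective fun x => hdvd x.index x.family

theorem exists_finite_incSpan_eq {I : Ideal (MvPolynomial (IncVar τ) K)} (hI : IsIncStable I) :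
    ∃ B ⊆ (I : Set (MvPolynomial (IncVar τ) K)), B.Finite ∧ incSpan B = I := by
  obtain ⟨B, hBI, hBfin, hB⟩ := Set.exists_subset_image_finite_and.mp
    (wellQuasiOrdered_incDvd.exists_finite_basis
      (degLex.degree '' ((I : Set (MvPolynomial (IncVar τ) K)) \ {0})))
  refine ⟨B, fun b hb => (hBI hb).1, hBfin, le_antisymm (incSpan_le hI fun b hb => (hBI hb).1) ?_⟩
  refine le_incSpan_of_forall_incDvd_degree hI (fun b hb => (hBI hb).1) (fun h => (hBI h).2 rfl)
    fun f hf hf0 => ?_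
  obtain ⟨_, ⟨b, hb, rfl⟩, hdvd⟩ := hB _ ⟨f, ⟨hf, hf0⟩, rfl⟩
  exact ⟨b, hb, hdvd⟩

theorem exists_finite_subset_incSpan (S : Set (MvPolynomial (IncVar τ) K)) :
    ∃ T ⊆ S, T.Finite ∧ S ⊆ incSpan T := by
  obtain ⟨B, hBS, hBfin, hB⟩ := exists_finite_incSpan_eq (isIncStable_incSpan S)
  obtain ⟨G, hGS, hBG⟩ := Submodule.subset_span_finite_of_subset_span (t := hBfin.toFinset)
    (by simpa [incSpan, Ideal.span] using hBS)
  have hGS : ∀ p ∈ G, ∃ s ∈ S, ∃ π : ℕ → ℕ, StrictMono π ∧ rename (incMap π) s = p := hGS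
  choose! s hsS π hπ hsπ using hGS
  refine ⟨s '' G, Set.image_subset_iff.mpr hsS, G.finite_toSet.image s, ?_⟩
  refine (subset_incSpan S).trans ?_
  rw [← hB]
  refine incSpan_le (isIncStable_incSpan _) ?_
  rw [← hBfin.coe_toFinset]
  refine hBG.trans (Ideal.span_le.mpr fun p hp => ?_)
  exact Ideal.subset_span ⟨s p, Set.mem_image_of_mem s hp, π p, hπ p hp, hsπ p hp⟩

end Cohen

attribute [local instance 100] LieRing.ofAssociativeRing

section UTGrading

variable {K : Type*} [Field K] {G : Type*} [CommGroup G]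

theorem apply_eq_zero_of_mem_utGrading {g h l : G} {N : M3 K} (hN : N ∈ utGrading K G g h l)
    {i j : Fin 3} (hij : ¬ ((i = j ∧ l = 1) ∨ (i = 0 ∧ j = 1 ∧ l = g) ∨ (i = 1 ∧ j = 2 ∧ l = h) ∨
      (i = 0 ∧ j = 2 ∧ l = g * h))) : N i j = 0 := by
  induction hN using Submodule.span_induction with
  | mem m hm =>
    rcases hm with ⟨hl, rfl | rfl | rfl⟩ | ⟨hl, rfl⟩ | ⟨hl, rfl⟩ | ⟨hl, rfl⟩ <;>
      simp only [E3, Matrix.single_apply] <;> aesop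
  | zero => rfl
  | add _ _ _ _ h₁ h₂ => simp [h₁, h₂]
  | smul _ _ _ h => simp [h]

variable {g : G}

theorem ne_one_of_sq_ne_one (hg : g ^ 2 ≠ 1) : g ≠ 1 := by
  rintro rfl
  exact hg (one_pow 2)

theorem inv_ne_self_of_sq_ne_one (hg : g ^ 2 ≠ 1) : g⁻¹ ≠ g :=
  fun h => hg (sq g ▸ inv_eq_iff_mul_eq_one.mp h)

variable (K) in
/-- Matrix indices are 0-based: `edgeUnit false = e₁₂` and `edgeUnit true = e₂₃`. -/
def edgeUnit (t : Bool) : M3 K := cond t (E3 K 1 2) (E3 K 0 1)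

def edgeDeg (g : G) (t : Bool) : G := cond t g⁻¹ g

def diagGap (N : M3 K) (t : Bool) : K := cond t (N 2 2 - N 1 1) (N 1 1 - N 0 0)

theorem edgeDeg_ne_one (hg : g ^ 2 ≠ 1) (t : Bool) : edgeDeg g t ≠ 1 := by
  cases t
  · exact ne_one_of_sq_ne_one hg
  · exact inv_ne_one.mpr (ne_one_of_sq_ne_one hg)

theorem edgeDeg_injective (hg : g ^ 2 ≠ 1) : Function.Injective (edgeDeg g) := by
  rintro (_ | _) (_ | _) h
  · rfl
  · exact absurd h.symm (inv_ne_self_of_sq_ne_one hg)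
  · exact absurd h (inv_ne_self_of_sq_ne_one hg)
  · rfl

theorem edgeUnit_mem_utGrading (t : Bool) : edgeUnit K t ∈ utGrading K G g g⁻¹ (edgeDeg g t) := by
  cases t
  · exact Submodule.subset_span (Or.inr (Or.inl ⟨rfl, rfl⟩))
  · exact Submodule.subset_span (Or.inr (Or.inr (Or.inl ⟨rfl, rfl⟩)))

theorem exists_eq_smul_edgeUnit (hg : g ^ 2 ≠ 1) {t : Bool} {N : M3 K}
    (hN : N ∈ utGrading K G g g⁻¹ (edgeDeg g t)) : ∃ c : K, N = c • edgeUnit K t := by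
  have h1 := ne_one_of_sq_ne_one hg
  have h2 := inv_ne_self_of_sq_ne_one hg
  refine ⟨cond t (N 1 2) (N 0 1), ?_⟩
  cases t <;> ext i j <;> fin_cases i <;> fin_cases j <;>
    simp [edgeUnit, edgeDeg, E3, apply_eq_zero_of_mem_utGrading hN, h1, h2, h2.symm]

theorem lie_edgeUnit (hg : g ^ 2 ≠ 1) {N : M3 K} (hN : N ∈ utGrading K G g g⁻¹ 1) (t : Bool) :
    ⁅edgeUnit K t, N⁆ = diagGap N t • edgeUnit K t := by
  have h1 := ne_one_of_sq_ne_one hg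
  cases t <;> ext i j <;> fin_cases i <;> fin_cases j <;>
    simp [edgeUnit, diagGap, E3, Ring.lie_def, Matrix.mul_apply, Fin.sum_univ_three,
      apply_eq_zero_of_mem_utGrading hN, h1, h1.symm]

theorem lie_edgeUnit_false_true : ⁅edgeUnit K false, edgeUnit K true⁆ = E3 K 0 2 := by
  ext i j
  fin_cases i <;> fin_cases j <;>
    simp [edgeUnit, E3, Ring.lie_def]

end UTGrading

section LeftNormed

variable {K : Type*} [Field K] {G : Type*}

theorem lnorm_append (x : FL K G) (l₁ l₂ : List (FL K G)) :
    lnorm K G x (l₁ ++ l₂) = lnorm K G (lnorm K G x l₁) l₂ :=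
  List.foldl_append

theorem LieHom.map_lnorm_replicate {L : Type*} [LieRing L] [LieAlgebra K L]
    (ψ : FL K G →ₗ⁅K⁆ L) {E : L} {y : FL K G} {c : K} (hy : ⁅E, ψ y⁆ = c • E) (n : ℕ)
    {x : FL K G} {α : K} (hx : ψ x = α • E) :
    ψ (lnorm K G x (List.replicate n y)) = (α * c ^ n) • E := by
  induction n generalizing x α with
  | zero => simpa [lnorm] using hx
  | succ n ih =>
    rw [List.replicate_succ, lnorm, List.foldl_cons, ← lnorm,
      ih (x := ⁅x, y⁆) (α := α * c) (by rw [LieHom.map_lie, hx, smul_lie, hy, smul_smul]),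
      pow_succ', mul_assoc]

end LeftNormed

section Represents

open IncVar

variable {K : Type*} [Field K] {G : Type*} [CommGroup G] {g : G}

theorem LieHom.map_lnorm_yRun {L : Type*} [LieRing L] [LieAlgebra K L]
    (ψ : FL K G →ₗ⁅K⁆ L) {E : L} {c : ℕ → K} (hc : ∀ i, ⁅E, ψ (of K (i, 1))⁆ = c i • E)
    (p : ℕ → ℕ) (r : ℕ) {x : FL K G} {α : K} (hx : ψ x = α • E) :
    ψ (lnorm K G x (yRun K G p r)) = (α * ∏ i ∈ Finset.range r, c i ^ p i) • E := by
  induction r with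
  | zero => simpa [yRun, lnorm] using hx
  | succ r ih =>
    rw [yRun.eq_2, lnorm_append, ψ.map_lnorm_replicate (hc r) _ ih, Finset.prod_range_succ,
      mul_assoc]

def GradedEval (g : G) (ψ : FL K G →ₗ⁅K⁆ M3 K) : Prop :=
  ∀ (i : ℕ) (l : G), ψ (of K (i, l)) ∈ utGrading K G g g⁻¹ l

/-- The valuation `u_i = (y_i)₂₂ - (y_i)₁₁` at `mk i false`, `v_i = (y_i)₃₃ - (y_i)₂₂` at
`mk i true`. -/
noncomputable def gapVal (ψ : FL K G →ₗ⁅K⁆ M3 K) (x : IncVar Bool) : K :=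
  diagGap (ψ (of K (x.index, 1))) x.family

def Represents (g : G) (f : FL K G) (P : MvPolynomial (IncVar Bool) K) : Prop :=
  ∀ ψ : FL K G →ₗ⁅K⁆ M3 K, GradedEval g ψ → ∀ a : Bool → K,
    (∀ t, ψ (of K (0, edgeDeg g t)) = a t • edgeUnit K t) →
      ψ f = (a false * a true * eval (gapVal ψ) P) • E3 K 0 2

theorem represents_zero : Represents g (0 : FL K G) 0 := fun ψ _ a _ => by simp

theorem Represents.add {f₁ f₂ : FL K G} {P₁ P₂ : MvPolynomial (IncVar Bool) K}
    (h₁ : Represents g f₁ P₁) (h₂ : Represents g f₂ P₂) : Represents g (f₁ + f₂) (P₁ + P₂) :=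
  fun ψ hψ a ha => by rw [map_add, h₁ ψ hψ a ha, h₂ ψ hψ a ha, map_add, mul_add, add_smul]

theorem Represents.smul {f : FL K G} {P : MvPolynomial (IncVar Bool) K} (h : Represents g f P)
    (c : K) : Represents g (c • f) (C c * P) :=
  fun ψ hψ a ha => by
    rw [map_smul, h ψ hψ a ha, smul_smul, map_mul, eval_C, mul_left_comm (a false * a true)]

theorem represents_monAU (hg : g ^ 2 ≠ 1) (r : ℕ) (p q : ℕ → ℕ) :
    Represents g (monAU K g r p q)
      (∏ i ∈ Finset.range r, X (mk i false) ^ p i * X (mk i true) ^ q i) := by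
  intro ψ hψ a ha
  have hgap (t : Bool) (i : ℕ) :
      ⁅edgeUnit K t, ψ (of K (i, 1))⁆ = gapVal ψ (mk i t) • edgeUnit K t :=
    lie_edgeUnit hg (hψ i 1) t
  rw [monAU, LieHom.map_lie, ψ.map_lnorm_yRun (hgap false) p r (x := of K (0, g)) (ha false),
    ψ.map_lnorm_yRun (hgap true) q r (x := of K (0, g⁻¹)) (ha true), smul_lie, lie_smul,
    smul_smul, lie_edgeUnit_false_true]
  simp only [map_prod, map_mul, map_pow, eval_X, Finset.prod_mul_distrib]
  congr 1
  ring

theorem IsAU.exists_represents (hg : g ^ 2 ≠ 1) {f : FL K G} (hf : IsAU K g f) :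
    ∃ P, Represents g f P := by
  obtain ⟨d, -, rfl⟩ := hf
  refine ⟨∑ s, C (d.α s) *
    ∏ i ∈ Finset.range d.r, X (mk i false) ^ d.p s i * X (mk i true) ^ d.q s i, fun ψ hψ a ha => ?_⟩
  simp only [AUData.elem, map_sum, map_smul, represents_monAU hg _ _ _ ψ hψ a ha, smul_smul,
    Finset.sum_smul, map_mul, eval_C, Finset.mul_sum]
  congr! 2
  ring

open scoped Classical in
noncomputable def renameSubst (π : ℕ → ℕ) : FL K G →ₗ⁅K⁆ FL K G :=
  FreeLieAlgebra.lift K fun x => of K (if x.2 = 1 then π x.1 else x.1, x.2)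

theorem renameSubst_of_one (π : ℕ → ℕ) (i : ℕ) :
    renameSubst π (of K (i, (1 : G))) = of K (π i, 1) := by
  rw [renameSubst, FreeLieAlgebra.lift_of_apply, if_pos rfl]

theorem renameSubst_of_ne_one (π : ℕ → ℕ) (i : ℕ) {l : G} (hl : l ≠ 1) :
    renameSubst π (of K (i, l)) = of K (i, l) := by
  rw [renameSubst, FreeLieAlgebra.lift_of_apply, if_neg hl]

theorem exists_renameSubst_of_eq (π : ℕ → ℕ) (i : ℕ) (l : G) :
    ∃ j, renameSubst π (of K (i, l)) = of K (j, l) := by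
  by_cases hl : l = 1
  · subst hl
    exact ⟨π i, renameSubst_of_one π i⟩
  · exact ⟨i, renameSubst_of_ne_one π i hl⟩

theorem isGradedSubst_renameSubst (π : ℕ → ℕ) : IsGradedSubst K G (renameSubst π) := by
  intro i l
  obtain ⟨j, hj⟩ := exists_renameSubst_of_eq (K := K) π i l
  exact hj ▸ IsHom.var j l

open scoped Classical in
noncomputable def bracketSubst (l : G) (i : ℕ) : FL K G →ₗ⁅K⁆ FL K G :=
  FreeLieAlgebra.lift K (Function.update (of K) (0, l) ⁅of K (0, l), of K (i, 1)⁆)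

theorem bracketSubst_of_self (l : G) (i : ℕ) :
    bracketSubst l i (of K (0, l)) = ⁅of K (0, l), of K (i, 1)⁆ := by
  classical
  rw [bracketSubst, FreeLieAlgebra.lift_of_apply, Function.update_self]

theorem bracketSubst_of_ne {l : G} (i : ℕ) {x : ℕ × G} (hx : x ≠ (0, l)) :
    bracketSubst l i (of K x) = of K x := by
  classical
  rw [bracketSubst, FreeLieAlgebra.lift_of_apply, Function.update_of_ne hx]

theorem isGradedSubst_bracketSubst (l : G) (i : ℕ) : IsGradedSubst K G (bracketSubst l i) := by
  intro j l'
  by_cases h : (j, l') = (0, l)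
  · obtain ⟨rfl, rfl⟩ := Prod.mk.injEq _ _ _ _ ▸ h
    rw [bracketSubst_of_self]
    simpa only [mul_one] using (IsHom.var (K := K) 0 l').lie (IsHom.var i 1)
  · rw [bracketSubst_of_ne i h]
    exact IsHom.var j l'

theorem Represents.map_renameSubst (hg : g ^ 2 ≠ 1) {f : FL K G} {P : MvPolynomial (IncVar Bool) K}
    (h : Represents g f P) {π : ℕ → ℕ} :
    Represents g (renameSubst π f) (rename (incMap π) P) := by
  intro ψ hψ a ha
  have hψ' : GradedEval g (ψ.comp (renameSubst π)) := fun i l => by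
    obtain ⟨j, hj⟩ := exists_renameSubst_of_eq (K := K) π i l
    rw [LieHom.comp_apply, hj]
    exact hψ j l
  have ha' : ∀ t, ψ.comp (renameSubst π) (of K (0, edgeDeg g t)) = a t • edgeUnit K t := fun t => by
    rw [LieHom.comp_apply, renameSubst_of_ne_one π 0 (edgeDeg_ne_one hg t), ha]
  have hw : gapVal (ψ.comp (renameSubst π)) = gapVal ψ ∘ incMap π := funext fun x => by
    rw [Function.comp_apply, gapVal, gapVal, LieHom.comp_apply, renameSubst_of_one]
    rfl
  rw [← LieHom.comp_apply, h _ hψ' a ha', hw, eval_rename]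

theorem Represents.map_bracketSubst (hg : g ^ 2 ≠ 1) {f : FL K G} {P : MvPolynomial (IncVar Bool) K}
    (h : Represents g f P) (x : IncVar Bool) :
    Represents g (bracketSubst (edgeDeg g x.family) x.index f) (X x * P) := by
  intro ψ hψ a ha
  set t := x.family
  set ψ' := ψ.comp (bracketSubst (edgeDeg g t) x.index)
  have hgap : ψ' (of K (0, edgeDeg g t)) = (a t * gapVal ψ x) • edgeUnit K t := by
    rw [LieHom.comp_apply, bracketSubst_of_self, LieHom.map_lie, ha, smul_lie,
      lie_edgeUnit hg (hψ x.index 1), smul_smul]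
    rfl
  have hne {z : ℕ × G} (hz : z ≠ (0, edgeDeg g t)) : ψ' (of K z) = ψ (of K z) := by
    rw [LieHom.comp_apply, bracketSubst_of_ne x.index hz]
  have hψ' : GradedEval g ψ' := fun j l => by
    by_cases hz : (j, l) = (0, edgeDeg g t)
    · obtain ⟨rfl, rfl⟩ := Prod.ext_iff.mp hz
      rw [hgap]
      exact Submodule.smul_mem _ _ (edgeUnit_mem_utGrading t)
    · rw [hne hz]
      exact hψ j l
  have ha' : ∀ t', ψ' (of K (0, edgeDeg g t')) =
      Function.update a t (a t * gapVal ψ x) t' • edgeUnit K t' := fun t' => by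
    by_cases ht : t' = t
    · rw [ht, hgap, Function.update_self]
    · rw [hne fun hz => ht (edgeDeg_injective hg (Prod.ext_iff.mp hz).2),
        Function.update_of_ne ht, ha]
  have hw : gapVal ψ' = gapVal ψ := funext fun y =>
    congrArg (diagGap · y.family) (hne fun hz => edgeDeg_ne_one hg t (Prod.ext_iff.mp hz).2.symm)
  rw [← LieHom.comp_apply, h ψ' hψ' _ ha', hw, map_mul, eval_X]
  congr 1
  cases t <;> simp only [Function.update_self, ne_eq, Bool.true_eq_false, Bool.false_eq_true,
    not_false_eq_true, Function.update_of_ne] <;> ring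

end Represents

section FiniteBasis

variable {K : Type*} [Field K] {G : Type*} [CommGroup G] {g : G}

theorem mem_tClosure_iff {S : Set (FL K G)} {x : FL K G} :
    x ∈ tClosure K G S ↔ ∀ I : LieIdeal K (FL K G), IsTIdeal K G I ∧ S ⊆ I → x ∈ I := by
  rw [tClosure, ← SetLike.mem_coe, LieSubmodule.coe_sInf, Set.mem_iInter₂]
  rfl

theorem subset_tClosure (S : Set (FL K G)) : S ⊆ tClosure K G S :=
  fun _ hx => mem_tClosure_iff.mpr fun _ hI => hI.2 hx

theorem isTIdeal_tClosure (S : Set (FL K G)) : IsTIdeal K G (tClosure K G S) :=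
  fun φ hφ _ ha => mem_tClosure_iff.mpr fun I hI => hI.1 φ hφ _ (mem_tClosure_iff.mp ha I hI)

theorem exists_represents_mul (hg : g ^ 2 ≠ 1) {T : LieIdeal K (FL K G)} (hT : IsTIdeal K G T)
    (p : MvPolynomial (IncVar Bool) K) {P : MvPolynomial (IncVar Bool) K}
    (hP : ∃ h ∈ T, Represents g h P) : ∃ h ∈ T, Represents g h (p * P) := by
  induction p using MvPolynomial.induction_on generalizing P with
  | C c =>
    obtain ⟨h, hT', hh⟩ := hP
    exact ⟨c • h, T.smul_mem c hT', hh.smul c⟩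
  | add p q hp hq =>
    obtain ⟨h₁, hT₁, hh₁⟩ := hp hP
    obtain ⟨h₂, hT₂, hh₂⟩ := hq hP
    rw [add_mul]
    exact ⟨h₁ + h₂, T.add_mem hT₁ hT₂, hh₁.add hh₂⟩
  | mul_X p x ih =>
    obtain ⟨h, hT', hh⟩ := hP
    rw [mul_assoc]
    exact ih ⟨_, hT _ (isGradedSubst_bracketSubst _ _) h hT', hh.map_bracketSubst hg x⟩

theorem exists_represents_of_mem_incSpan (hg : g ^ 2 ≠ 1) {T : LieIdeal K (FL K G)}
    (hT : IsTIdeal K G T) {S : Set (MvPolynomial (IncVar Bool) K)}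
    (hS : ∀ P ∈ S, ∃ h ∈ T, Represents g h P) {P : MvPolynomial (IncVar Bool) K}
    (hP : P ∈ incSpan S) : ∃ h ∈ T, Represents g h P := by
  induction hP using Submodule.span_induction with
  | mem _ hx =>
    obtain ⟨s, hs, π, -, rfl⟩ := hx
    obtain ⟨h, hT', hh⟩ := hS s hs
    exact ⟨renameSubst π h, hT _ (isGradedSubst_renameSubst π) h hT', hh.map_renameSubst hg⟩
  | zero => exact ⟨0, T.zero_mem, represents_zero⟩
  | add _ _ _ _ ih₁ ih₂ =>
    obtain ⟨h₁, hT₁, hh₁⟩ := ih₁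
    obtain ⟨h₂, hT₂, hh₂⟩ := ih₂
    exact ⟨h₁ + h₂, T.add_mem hT₁ hT₂, hh₁.add hh₂⟩
  | smul p _ _ ih => exact exists_represents_mul hg hT p ih

theorem exists_finite_subset_le_tClosure_sup (hg : g ^ 2 ≠ 1) (A : Set (FL K G))
    (hA : ∀ f ∈ A, ∃ P, Represents g f P) :
    ∃ F ⊆ A, F.Finite ∧ A ⊆ ↑(tClosure K G F ⊔ IdUT3 K G g g⁻¹) := by
  choose! P hP using hA
  obtain ⟨F, hFA, hFfin, hF⟩ := Set.exists_subset_image_finite_and.mp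
    (exists_finite_subset_incSpan (P '' A))
  refine ⟨F, hFA, hFfin, fun f hf => ?_⟩
  obtain ⟨h, hT, hh⟩ := exists_represents_of_mem_incSpan hg (isTIdeal_tClosure F)
    (by rintro _ ⟨f', hf', rfl⟩; exact ⟨f', subset_tClosure F hf', hP f' (hFA hf')⟩)
    (hF ⟨f, hf, rfl⟩)
  have hid : f - h ∈ IdUT3 K G g g⁻¹ := fun ψ hψ => by
    choose a ha using fun t => exists_eq_smul_edgeUnit hg (hψ 0 (edgeDeg g t))
    rw [map_sub, hP f hf ψ hψ a ha, hh ψ hψ a ha, sub_self]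
  exact (LieSubmodule.mem_sup _ _ _).mpr ⟨h, hT, f - h, hid, add_sub_cancel h f⟩

end FiniteBasis

theorem stmt11_general (K : Type*) [Field K] (G : Type*) [CommGroup G] (g : G) (hg : g ^ 2 ≠ 1)
    (J : LieIdeal K (FL K G)) :
    ∃ Afin : Set (FL K G), Afin ⊆ {f | IsAU K g f ∧ f ∈ J} ∧ Afin.Finite ∧
      {f | IsAU K g f ∧ f ∈ J} ⊆ ↑(tClosure K G Afin ⊔ IdUT3 K G g g⁻¹) :=
  exists_finite_subset_le_tClosure_sup hg _ fun _ hf => IsAU.exists_represents hg hf.1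

/-- **Lemma.** If `J` is a `T_G`-ideal containing `Id_G(UT₃⁽⁻⁾, Γ(g, g⁻¹))` and `A` is the set
of polynomials of type `(g, g⁻¹)` belonging to `J`, then there is a finite subset `Afin ⊆ A`
with `A ⊆ ⟨Afin⟩^{T_G} + Id_G(UT₃⁽⁻⁾, Γ(g, g⁻¹))`. -/
theorem stmt11 (K : Type*) [Field K] (G : Type*) [CommGroup G] (g : G) (hg : g ^ 2 ≠ 1)
    (J : LieIdeal K (FL K G)) (hJ : IsTIdeal K G J) (hId : IdUT3 K G g g⁻¹ ≤ J) :
    ∃ Afin : Set (FL K G), Afin ⊆ {f | IsAU K g f ∧ f ∈ J} ∧ Afin.Finite ∧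
      {f | IsAU K g f ∧ f ∈ J} ⊆ ↑(tClosure K G Afin ⊔ IdUT3 K G g g⁻¹) :=
  stmt11_general K G g hg J
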